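/- Let (G,·,e,⊙) be a left group-e-semigroup and let Δ_e := {x·(e⊙x)⁻¹ : x ∈ G} (inverses in the group (G,·)). Then Δ_e is a normal subgroup of (G,·); for all x,y ∈ G one has x⁻¹·y ∈ Δ_e if and only if e⊙x = e⊙y; and the map x ↦ e⊙x induces a well-defined bijection φ from the quotient group G/Δ_e onto e⊙G = {e⊙x : x ∈ G} satisfying φ(x̄) = e⊙x and φ(x̄·ȳ) = φ(x̄)⊙φ(ȳ) for all x,y ∈ G; thus G/Δ_e is isomorphic to the group (e⊙G,⊙). -/

import Mathlib

/-!
The map `f := (e ⊙ ·)` is multiplicative from `(G, ·)` to `(G, ⊙)`: by the join law and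
associativity, `e ⊙ (x · y) = (e ⊙ x) ⊙ y = ((e ⊙ x) ⊙ e) ⊙ y = (e ⊙ x) ⊙ (e ⊙ y)`.
For any multiplicative map from a group into a magma, the fibre of `f e` is a normal subgroup
whose left cosets are exactly the fibres of `f`, so `f` factors injectively through the quotient.
Since `f` is moreover idempotent, this fibre is `{x · (f x)⁻¹}`.
-/

section MulMap

variable {G M : Type*} [Group G] {op : M → M → M} {f : G → M}

theorem op_map_one_map (hf : ∀ x y, f (x * y) = op (f x) (f y)) (x : G) :
    op (f 1) (f x) = f x := by
  rw [← hf, one_mul]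

theorem op_map_map_one (hf : ∀ x y, f (x * y) = op (f x) (f y)) (x : G) :
    op (f x) (f 1) = f x := by
  rw [← hf, mul_one]

theorem op_map_map_inv (hf : ∀ x y, f (x * y) = op (f x) (f y)) (x : G) :
    op (f x) (f x⁻¹) = f 1 := by
  rw [← hf, mul_inv_cancel]

def oneFiber (hf : ∀ x y, f (x * y) = op (f x) (f y)) : Subgroup G where
  carrier := {d | f d = f 1}
  one_mem' := rfl
  mul_mem' {a b} (ha : f a = f 1) (hb : f b = f 1) := by
    show f (a * b) = f 1
    rw [hf, ha, hb, ← hf, mul_one]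
  inv_mem' {a} (ha : f a = f 1) := by
    calc f a⁻¹ = op (f 1) (f a⁻¹) := (op_map_one_map hf _).symm
      _ = op (f a) (f a⁻¹) := by rw [ha]
      _ = f 1 := op_map_map_inv hf a

variable (hf : ∀ x y, f (x * y) = op (f x) (f y))

theorem mem_oneFiber {d : G} : d ∈ oneFiber hf ↔ f d = f 1 := Iff.rfl

theorem oneFiber_normal : (oneFiber hf).Normal where
  conj_mem a (ha : f a = f 1) g := by
    show f (g * a * g⁻¹) = f 1
    rw [hf, hf g, ha, op_map_map_one hf, op_map_map_inv hf]

theorem map_eq_map_iff_inv_mul_mem_oneFiber {x y : G} :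
    f x = f y ↔ x⁻¹ * y ∈ oneFiber hf := by
  rw [mem_oneFiber]
  constructor
  · intro h
    rw [hf, ← h, ← hf, inv_mul_cancel]
  · intro h
    rw [← mul_inv_cancel_left x y, hf x, h, op_map_map_one hf]

theorem leftRel_oneFiber : QuotientGroup.leftRel (oneFiber hf) = Setoid.ker f := by
  ext x y
  rw [QuotientGroup.leftRel_apply, Setoid.ker_def, map_eq_map_iff_inv_mul_mem_oneFiber hf]

def oneFiber.lift : G ⧸ oneFiber hf → M :=
  Quotient.lift (s := QuotientGroup.leftRel (oneFiber hf)) f (leftRel_oneFiber hf).le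

theorem oneFiber.lift_mk (x : G) : oneFiber.lift hf (QuotientGroup.mk x) = f x := rfl

theorem oneFiber.lift_injective : Function.Injective (oneFiber.lift hf) :=
  (Setoid.lift_injective_iff_ker_eq_of_le _).2 (leftRel_oneFiber hf).symm

theorem oneFiber.range_lift : Set.range (oneFiber.lift hf) = Set.range f :=
  Set.range_quotient_lift (s := QuotientGroup.leftRel (oneFiber hf)) _

end MulMap

theorem coe_oneFiber_of_idempotent {G : Type*} [Group G] {op : G → G → G} {f : G → G}
    (hf : ∀ x y, f (x * y) = op (f x) (f y)) (hidem : ∀ x, f (f x) = f x) :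
    (oneFiber hf : Set G) = {d | ∃ x, d = x * (f x)⁻¹} := by
  ext d
  constructor
  · intro (hd : f d = f 1)
    refine ⟨d * f 1, ?_⟩
    rw [hf, hidem, hd, ← hf, mul_one, mul_inv_cancel_right]
  · rintro ⟨x, rfl⟩
    rw [SetLike.mem_coe, (oneFiber_normal hf).mem_comm_iff,
      ← map_eq_map_iff_inv_mul_mem_oneFiber hf, hidem]

section LeftGroupESemigroup

variable {G : Type*} [Group G] {op : G → G → G}

theorem op_one_mul (hassoc : ∀ x y z, op (op x y) z = op x (op y z))
    (hjoin : ∀ x y : G, op 1 (x * y) = op 1 (op x y)) (x y : G) :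
    op 1 (x * y) = op (op 1 x) (op 1 y) := by
  have hright : ∀ x y : G, op 1 (x * y) = op (op 1 x) y := fun x y =>
    (hjoin x y).trans (hassoc 1 x y).symm
  calc op 1 (x * y) = op (op 1 (x * 1)) y := by rw [mul_one, hright]
    _ = op (op 1 x) (op 1 y) := by rw [hright, hassoc]

theorem op_one_op_one (hjoin : ∀ x y : G, op 1 (x * y) = op 1 (op x y)) (x : G) :
    op 1 (op 1 x) = op 1 x := by
  rw [← hjoin, one_mul]

end LeftGroupESemigroup

/-- Let `(G, ·, e, ⊙)` be a left group-`e`-semigroup (group identity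
`e = 1`) and `Δ_e := {x · (e ⊙ x)⁻¹ : x ∈ G}`. Then `Δ_e` is a normal subgroup of
`(G, ·)`; for all `x, y` one has `x⁻¹ · y ∈ Δ_e ↔ e ⊙ x = e ⊙ y`; and `x ↦ e ⊙ x`
induces a well-defined bijection `φ` from `G / Δ_e` onto `e ⊙ G` with
`φ(x̄) = e ⊙ x` and `φ(x̄ · ȳ) = φ(x̄) ⊙ φ(ȳ)`; thus `G / Δ_e ≅ (e ⊙ G, ⊙)`. -/
theorem stmt_13 {G : Type*} [Group G] (op : G → G → G)
    (hassoc : ∀ x y z : G, op (op x y) z = op x (op y z))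
    (hjoin : ∀ x y : G, op 1 (x * y) = op 1 (op x y)) :
    (∃ N : Subgroup G, N.Normal ∧
      (N : Set G) = {d : G | ∃ x : G, d = x * (op 1 x)⁻¹}) ∧
    (∀ x y : G, x⁻¹ * y ∈ {d : G | ∃ z : G, d = z * (op 1 z)⁻¹} ↔ op 1 x = op 1 y) ∧
    (∀ N : Subgroup G, N.Normal →
      (N : Set G) = {d : G | ∃ x : G, d = x * (op 1 x)⁻¹} →
      ∃ φ : G ⧸ N → G,
        (∀ x : G, φ (QuotientGroup.mk x) = op 1 x) ∧
        Function.Injective φ ∧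
        Set.range φ = Set.range (op 1) ∧
        ∀ x y : G, φ (QuotientGroup.mk (x * y)) =
          op (φ (QuotientGroup.mk x)) (φ (QuotientGroup.mk y))) := by
  have hf := op_one_mul hassoc hjoin
  have hΔ := coe_oneFiber_of_idempotent hf (op_one_op_one hjoin)
  refine ⟨⟨oneFiber hf, oneFiber_normal hf, hΔ⟩, fun x y => ?_, fun N _ hN => ?_⟩
  · rw [← hΔ, SetLike.mem_coe, map_eq_map_iff_inv_mul_mem_oneFiber hf]
  · obtain rfl : N = oneFiber hf := SetLike.coe_injective (hN.trans hΔ.symm)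
    exact ⟨oneFiber.lift hf, oneFiber.lift_mk hf, oneFiber.lift_injective hf,
      oneFiber.range_lift hf, hf⟩
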